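/- Let 𝔤₂ ⊂ 𝔰𝔬(7) be the annihilator of φ₀ in 𝔰𝔬(7) under the natural action on 3-forms, and let 𝔥₃ = {x ∈ M₇(ℝ) : ι₃*(x·φ₀) = ι₃*(x·*φ₀) = 0} with ι₃: ℝ³ → ℝ⁷ the inclusion of the first three coordinates (in suitable coordinates the single defining equation is x⁵₃ − x⁶₂ + x⁷₁ = 0 within M₇(ℝ)). Then 𝔥₃ has codimension 1 in M₇(ℝ), i.e., dim 𝔥₃ = 48. -/
import Mathlib

noncomputable section

/-- `dx^{abc}` evaluated on three vectors of ℝ⁷. -/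
def d3 (a b c : Fin 7) (u v w : Fin 7 → ℝ) : ℝ :=
  Matrix.det !![u a, v a, w a; u b, v b, w b; u c, v c, w c]

/-- `dx^{abcd}` evaluated on four vectors of ℝ⁷. -/
def d4 (a b c d : Fin 7) (u v w z : Fin 7 → ℝ) : ℝ :=
  Matrix.det !![u a, v a, w a, z a; u b, v b, w b, z b;
                u c, v c, w c, z c; u d, v d, w d, z d]

/-- The standard G₂ 3-form `φ₀` on ℝ⁷ (0-indexed coordinates). -/
def phi0 (u v w : Fin 7 → ℝ) : ℝ :=
  d3 4 5 6 u v w - (d3 4 0 1 u v w + d3 4 2 3 u v w)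
    - (d3 5 0 2 u v w + d3 5 3 1 u v w)
    - (d3 6 0 3 u v w + d3 6 1 2 u v w)

/-- Its Hodge dual, the coassociative 4-form `*φ₀`. -/
def starPhi0 (u v w z : Fin 7 → ℝ) : ℝ :=
  d4 0 1 2 3 u v w z - (d4 5 6 0 1 u v w z + d4 5 6 2 3 u v w z)
    - (d4 6 4 0 2 u v w z + d4 6 4 3 1 u v w z)
    - (d4 4 5 0 3 u v w z + d4 4 5 1 2 u v w z)

/-- The inclusion `ι₃ : ℝ³ → ℝ⁷` onto the first three coordinates. -/
def incl3 (v : Fin 3 → ℝ) : Fin 7 → ℝ :=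
  fun i => if h : (i : ℕ) < 3 then v ⟨i, h⟩ else 0

/-- `ι₃*(x·φ₀) = 0`: the infinitesimal gl(7,ℝ)-action of `x` on `φ₀`, restricted to the
coordinate ℝ³, vanishes. -/
def annPhi (x : Matrix (Fin 7) (Fin 7) ℝ) : Prop :=
  ∀ a b c : Fin 3 → ℝ,
    phi0 (x.mulVec (incl3 a)) (incl3 b) (incl3 c)
      + phi0 (incl3 a) (x.mulVec (incl3 b)) (incl3 c)
      + phi0 (incl3 a) (incl3 b) (x.mulVec (incl3 c)) = 0

/-- `ι₃*(x·*φ₀) = 0`. -/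
def annStarPhi (x : Matrix (Fin 7) (Fin 7) ℝ) : Prop :=
  ∀ a b c d : Fin 3 → ℝ,
    starPhi0 (x.mulVec (incl3 a)) (incl3 b) (incl3 c) (incl3 d)
      + starPhi0 (incl3 a) (x.mulVec (incl3 b)) (incl3 c) (incl3 d)
      + starPhi0 (incl3 a) (incl3 b) (x.mulVec (incl3 c)) (incl3 d)
      + starPhi0 (incl3 a) (incl3 b) (incl3 c) (x.mulVec (incl3 d)) = 0

/- ### Auxiliary lemmas -/

lemma det3_of' (a b c d e f g h i : ℝ) :
    Matrix.det !![a,b,c;d,e,f;g,h,i] =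
      a*e*i - a*f*h - b*d*i + b*f*g + c*d*h - c*e*g := by
  simp [Matrix.det_fin_three]

lemma det4_of' (a b c d e f g h i j k l m n o p : ℝ) :
    Matrix.det !![a,b,c,d;e,f,g,h;i,j,k,l;m,n,o,p] =
      a*(f*k*p - f*l*o - g*j*p + g*l*n + h*j*o - h*k*n)
      - b*(e*k*p - e*l*o - g*i*p + g*l*m + h*i*o - h*k*m)
      + c*(e*j*p - e*l*n - f*i*p + f*l*m + h*i*n - h*j*m)
      - d*(e*j*o - e*k*n - f*i*o + f*k*m + g*i*n - g*j*m) := by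
  rw [show ((!![a,b,c,d;e,f,g,h;i,j,k,l;m,n,o,p] : Matrix (Fin 4) (Fin 4) ℝ)).det
    = _ from Matrix.det_succ_row_zero _]
  simp (config := { decide := true }) [Fin.sum_univ_four, Matrix.det_fin_three,
    Matrix.submatrix, Fin.succAbove, show Fin.castSucc (2:Fin 3) = (2:Fin 4) from rfl]
  ring

lemma incl3_0 (v : Fin 3 → ℝ) : incl3 v 0 = v 0 := rfl
lemma incl3_1 (v : Fin 3 → ℝ) : incl3 v 1 = v 1 := rfl
lemma incl3_2 (v : Fin 3 → ℝ) : incl3 v 2 = v 2 := rfl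
lemma incl3_3 (v : Fin 3 → ℝ) : incl3 v 3 = 0 := rfl
lemma incl3_4 (v : Fin 3 → ℝ) : incl3 v 4 = 0 := rfl
lemma incl3_5 (v : Fin 3 → ℝ) : incl3 v 5 = 0 := rfl
lemma incl3_6 (v : Fin 3 → ℝ) : incl3 v 6 = 0 := rfl

lemma mulVec_incl3 (x : Matrix (Fin 7) (Fin 7) ℝ) (v : Fin 3 → ℝ) (i : Fin 7) :
    x.mulVec (incl3 v) i = x i 0 * v 0 + x i 1 * v 1 + x i 2 * v 2 := by
  simp [Matrix.mulVec, dotProduct, Fin.sum_univ_seven,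
    incl3_0, incl3_1, incl3_2, incl3_3, incl3_4, incl3_5, incl3_6]

lemma annPhi_of (x : Matrix (Fin 7) (Fin 7) ℝ) (h : x 4 2 - x 5 1 + x 6 0 = 0) :
    annPhi x := by
  intro a b c
  simp only [phi0, d3, det3_of', mulVec_incl3,
    incl3_0, incl3_1, incl3_2, incl3_3, incl3_4, incl3_5, incl3_6]
  linear_combination (-(a 0 * (b 1 * c 2 - b 2 * c 1) - a 1 * (b 0 * c 2 - b 2 * c 0)
    + a 2 * (b 0 * c 1 - b 1 * c 0))) * h

lemma annStarPhi_all (x : Matrix (Fin 7) (Fin 7) ℝ) : annStarPhi x := by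
  intro a b c d
  simp only [starPhi0, d4, det4_of', mulVec_incl3,
    incl3_0, incl3_1, incl3_2, incl3_3, incl3_4, incl3_5, incl3_6]
  ring

lemma eq_of_annPhi (x : Matrix (Fin 7) (Fin 7) ℝ) (h : annPhi x) :
    x 4 2 - x 5 1 + x 6 0 = 0 := by
  have := h ![1,0,0] ![0,1,0] ![0,0,1]
  simp only [phi0, d3, det3_of', mulVec_incl3,
    incl3_0, incl3_1, incl3_2, incl3_3, incl3_4, incl3_5, incl3_6,
    Matrix.cons_val_zero, Matrix.cons_val_one, Matrix.head_cons,
    Matrix.cons_val_two, Matrix.tail_cons] at this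
  linarith

/-- The defining linear functional. -/
def fLin : Matrix (Fin 7) (Fin 7) ℝ →ₗ[ℝ] ℝ where
  toFun x := x 4 2 - x 5 1 + x 6 0
  map_add' x y := by simp [Matrix.add_apply]; ring
  map_smul' r x := by simp [Matrix.smul_apply]; ring

/-- The space `𝔥₃ = {x ∈ M₇(ℝ) : ι₃*(x·φ₀) = ι₃*(x·*φ₀) = 0}` is cut out
by the single equation `x⁵₃ − x⁶₂ + x⁷₁ = 0` (1-indexed; below 0-indexed), so it has
codimension 1 in `M₇(ℝ)`, i.e. it is a linear subspace of dimension 48. -/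
theorem h3_g2_dimension :
    ({x : Matrix (Fin 7) (Fin 7) ℝ | annPhi x ∧ annStarPhi x} =
      {x : Matrix (Fin 7) (Fin 7) ℝ | x 4 2 - x 5 1 + x 6 0 = 0}) ∧
    ∃ S : Submodule ℝ (Matrix (Fin 7) (Fin 7) ℝ),
      (S : Set (Matrix (Fin 7) (Fin 7) ℝ)) =
        {x : Matrix (Fin 7) (Fin 7) ℝ | annPhi x ∧ annStarPhi x} ∧
      Module.finrank ℝ S = 48 := by
  have hset : ({x : Matrix (Fin 7) (Fin 7) ℝ | annPhi x ∧ annStarPhi x} =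
      {x : Matrix (Fin 7) (Fin 7) ℝ | x 4 2 - x 5 1 + x 6 0 = 0}) := by
    ext x
    constructor
    · rintro ⟨h1, _⟩
      exact eq_of_annPhi x h1
    · intro h
      exact ⟨annPhi_of x h, annStarPhi_all x⟩
  refine ⟨hset, LinearMap.ker fLin, ?_, ?_⟩
  · rw [hset]
    ext x
    simp [fLin, LinearMap.mem_ker]
  · have hsur : Function.Surjective fLin := by
      intro r
      refine ⟨Matrix.single 4 2 r, ?_⟩
      simp (config := { decide := true }) [fLin, Matrix.single]
    have h1 := LinearMap.finrank_range_add_finrank_ker fLin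
    rw [LinearMap.range_eq_top.mpr hsur, finrank_top] at h1
    have h2 : Module.finrank ℝ (Matrix (Fin 7) (Fin 7) ℝ) = 49 := by
      rw [Module.finrank_matrix]
      simp
    rw [h2, Module.finrank_self] at h1
    omega
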